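/- arXiv:1902.04873 — 6 statements merged into one kernel-verified Lean document; each statement's English description precedes it below -/
import Mathlib

section
/- Let G be a finite group and ψ an irreducible complex character of G. Then (1/|G|^{2g}) · Σ_{g₁,h₁,...,g_g,h_g ∈ G} ψ([g₁,h₁]⋯[g_g,h_g]) = 1/ψ(1)^{2g-1}, i.e., the expected value of ψ under the measure induced by the genus-g orientable surface word [x₁,y₁]⋯[x_g,y_g] equals ψ(1)^{1-2g}. -/
/-!
By Schur's lemma an endomorphism `f` of an irreducible representation that commutes with the
action satisfies `dim • f = tr f • 1`. This applies to the class sums `∑ₐ ρ (a x a⁻¹)` and to the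
commutator sum `C = ∑_{a,b} ρ ⁅a, b⁆`. Splitting `⁅a, b⁆ = (a b a⁻¹) b⁻¹` and using the
orthogonality relation `∑_b χ(b) χ(b⁻¹) = |G|` gives `dim² • C = |G|² • 1`. Summing `ρ` over all
surface words of genus `g` yields `C ^ g`, whose trace is `dim · (|G| / dim) ^ (2g)`.
-/

def IsIrredChar (G : Type) [Group G] (χ : G → ℂ) : Prop :=
  ∃ V : FDRep ℂ G, CategoryTheory.Simple V ∧ ∀ x : G, V.character x = χ x

open CategoryTheory Module
open scoped commutatorElement

theorem Fintype.sum_prod_ofFn_eq_pow {ι R : Type*} [Fintype ι] [Semiring R] (f : ι → R) (n : ℕ) :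
    ∑ c : Fin n → ι, (List.ofFn fun i => f (c i)).prod = (∑ i, f i) ^ n := by
  induction n with
  | zero => simp
  | succ n ih =>
    rw [← (Fin.consEquiv fun _ => ι).sum_comp, Fintype.sum_prod_type, pow_succ', ← ih,
      Finset.sum_mul_sum]
    simp [List.ofFn_succ]

namespace FDRep

variable {k : Type*} [Field k] {G : Type*} [Group G] (V : FDRep k G)

theorem commute_sum_ρ {ι : Type*} [Fintype ι] (f : ι → G)
    (hf : ∀ g, ∃ e : ι ≃ ι, ∀ i, f (e i) = g * f i * g⁻¹) (g : G) :
    Commute (∑ i, V.ρ (f i)) (V.ρ g) := by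
  obtain ⟨e, he⟩ := hf g
  have : V.ρ g * ∑ i, V.ρ (f i) = (∑ i, V.ρ (f i)) * V.ρ g := by
    rw [Finset.mul_sum, Finset.sum_mul]
    exact Fintype.sum_equiv e _ _ fun i => by rw [he, ← map_mul, ← map_mul, inv_mul_cancel_right]
  exact this.symm

section Schur

variable [IsAlgClosed k] [Simple V]

theorem exists_eq_smul_one_of_commute (f : V →ₗ[k] V) (hf : ∀ g, Commute f (V.ρ g)) :
    ∃ c : k, f = c • 1 := by
  let φ : V ⟶ V := ⟨FGModuleCat.ofHom f, fun g => by
    ext v; have := LinearMap.congr_fun (hf g) v; simp only [FDRep.ρ] at this; exact this⟩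
  obtain ⟨c, hc⟩ := endomorphism_simple_eq_smul_id k φ
  exact ⟨c, by ext v; exact (LinearMap.congr_fun (congrArg (fun h => h.hom.hom.hom) hc) v).symm⟩

theorem finrank_smul_eq_trace_smul_one (f : V →ₗ[k] V) (hf : ∀ g, Commute f (V.ρ g)) :
    (finrank k V : k) • f = LinearMap.trace k V f • 1 := by
  obtain ⟨c, rfl⟩ := exists_eq_smul_one_of_commute V f hf
  rw [map_smul, LinearMap.trace_one, smul_smul, smul_eq_mul, mul_comm]

end Schur

variable [Fintype G]

noncomputable def commutatorSum : V →ₗ[k] V := ∑ p : G × G, V.ρ ⁅p.1, p.2⁆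

theorem commute_commutatorSum (g : G) : Commute V.commutatorSum (V.ρ g) :=
  V.commute_sum_ρ _ (fun g => ⟨(MulAut.conj g).toEquiv.prodCongr (MulAut.conj g).toEquiv,
    fun _ => (conjugate_commutatorElement ..).symm⟩) g

theorem trace_commutatorSum :
    LinearMap.trace k V V.commutatorSum =
      ∑ b : G, LinearMap.trace k V ((∑ a : G, V.ρ (a * b * a⁻¹)) * V.ρ b⁻¹) := by
  rw [commutatorSum, Fintype.sum_prod_type, Finset.sum_comm, map_sum]
  simp only [Finset.sum_mul, ← map_mul, commutatorElement_def]

theorem sum_ρ_prod_commutators (n : ℕ) :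
    ∑ a : Fin n → G, ∑ b : Fin n → G, V.ρ (List.ofFn fun i => ⁅a i, b i⁆).prod =
      V.commutatorSum ^ n := by
  rw [commutatorSum, ← Fintype.sum_prod_ofFn_eq_pow,
    ← (Equiv.arrowProdEquivProdArrow _ _ _).symm.sum_comp, Fintype.sum_prod_type]
  simp [map_list_prod, List.map_ofFn, Function.comp_def]

section Irreducible

variable [IsAlgClosed k] [Simple V]

theorem finrank_smul_sum_conj (x : G) :
    (finrank k V : k) • ∑ a : G, V.ρ (a * x * a⁻¹) = (Nat.card G * V.character x : k) • 1 := by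
  rw [finrank_smul_eq_trace_smul_one V _ (commute_sum_ρ V _ fun g => ⟨Equiv.mulLeft g, fun a => by
    simp only [Equiv.coe_mulLeft, mul_inv_rev, mul_assoc]⟩), map_sum]
  change (∑ a, V.character (a * x * a⁻¹)) • (1 : V →ₗ[k] V) = _
  simp [char_conj, Nat.card_eq_fintype_card]

variable [Invertible (Nat.card G : k)]

theorem finrank_mul_trace_commutatorSum :
    (finrank k V : k) * LinearMap.trace k V V.commutatorSum = (Nat.card G : k) ^ 2 := by
  have orth := char_orthonormal V V
  rw [if_pos ⟨Iso.refl V⟩, inv_mul_eq_one₀ (Invertible.ne_zero _)] at orth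
  rw [trace_commutatorSum, Finset.mul_sum]
  calc ∑ b : G, (finrank k V : k) * LinearMap.trace k V ((∑ a : G, V.ρ (a * b * a⁻¹)) * V.ρ b⁻¹)
      _ = ∑ b : G, Nat.card G * V.character b * V.character b⁻¹ := by
        refine Finset.sum_congr rfl fun b _ => ?_
        rw [← smul_eq_mul, ← map_smul, ← smul_mul_assoc, finrank_smul_sum_conj, smul_mul_assoc,
          one_mul, map_smul, smul_eq_mul]
        rfl
      _ = (Nat.card G : k) ^ 2 := by
        simp only [mul_assoc, ← Finset.mul_sum, orth, sq]

theorem finrank_sq_smul_commutatorSum :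
    (finrank k V : k) ^ 2 • V.commutatorSum = (Nat.card G : k) ^ 2 • 1 := by
  rw [sq, mul_smul, finrank_smul_eq_trace_smul_one V _ V.commute_commutatorSum, smul_smul,
    finrank_mul_trace_commutatorSum]

theorem finrank_pow_mul_sum_character_prod_commutators (n : ℕ) :
    (finrank k V : k) ^ (2 * n) *
        ∑ a : Fin n → G, ∑ b : Fin n → G, V.character (List.ofFn fun i => ⁅a i, b i⁆).prod =
      (Nat.card G : k) ^ (2 * n) * finrank k V := by
  have := congrArg (LinearMap.trace k V) (congrArg (· ^ n) V.finrank_sq_smul_commutatorSum)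
  simp only [smul_pow, ← pow_mul, one_pow, map_smul, LinearMap.trace_one, smul_eq_mul,
    ← V.sum_ρ_prod_commutators, map_sum] at this
  exact this

end Irreducible

end FDRep

/-- The expected value of an irreducible character `ψ` under the measure induced by the
genus-`g` orientable surface word `[x₁,y₁]⋯[x_g,y_g]` equals `ψ(1)^{1-2g}`. -/
theorem stmt3 (G : Type) [Group G] [Fintype G] (ψ : G → ℂ) (hψ : IsIrredChar G ψ)
    (g : ℕ) (hg : 1 ≤ g) :
    (1 / (Nat.card G : ℂ) ^ (2 * g)) * ∑ a : Fin g → G, ∑ b : Fin g → G,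
        ψ ((List.ofFn fun i => a i * b i * (a i)⁻¹ * (b i)⁻¹).prod) =
      1 / (ψ 1) ^ (2 * g - 1) := by
  obtain ⟨V, _, hχ⟩ := hψ
  obtain rfl : V.character = ψ := funext hχ
  have hG : (Nat.card G : ℂ) ≠ 0 := Nat.cast_ne_zero.mpr Nat.card_pos.ne'
  have := invertibleOfNonzero hG
  have hn : (finrank ℂ V : ℂ) ≠ 0 :=
    left_ne_zero_of_mul (V.finrank_mul_trace_commutatorSum.trans_ne (pow_ne_zero 2 hG))
  have key := V.finrank_pow_mul_sum_character_prod_commutators g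
  rw [FDRep.char_one, div_mul_eq_mul_div, one_mul,
    div_eq_div_iff (pow_ne_zero _ hG) (pow_ne_zero _ hn), one_mul]
  apply mul_right_cancel₀ hn
  rw [mul_assoc, pow_sub_one_mul (by omega), mul_comm]
  exact key
end

section
/- Let G be a finite group and ψ an irreducible complex character of G, and let ε(ψ) = (1/|G|) Σ_{g ∈ G} ψ(g²) be the Frobenius–Schur indicator of ψ. Then for every g ≥ 1, (1/|G|^g) Σ_{g₁,...,g_g ∈ G} ψ(g₁²⋯g_g²) = ε(ψ)^g / ψ(1)^{g-1}. -/
open CategoryTheory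

theorem pow_succ_div_pow_self {K : Type*} [GroupWithZero K] (x : K) (n : ℕ) :
    x ^ (n + 1) / x ^ n = x := by
  rcases eq_or_ne x 0 with rfl | hx
  · simp
  · rw [pow_succ', mul_div_cancel_right₀ _ (pow_ne_zero _ hx)]

theorem Representation.commute_sum_sq {k G V : Type*} [CommSemiring k] [Group G] [Fintype G]
    [AddCommMonoid V] [Module k V] (ρ : Representation k G V) (g : G) :
    Commute (∑ x : G, ρ (x ^ 2)) (ρ g) := by
  simp only [Commute, SemiconjBy, Finset.sum_mul, Finset.mul_sum, ← map_mul]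
  refine Fintype.sum_equiv (MulAut.conj g⁻¹).toEquiv _ _ fun x => ?_
  simp only [MulEquiv.toEquiv_eq_coe, MulEquiv.coe_toEquiv, MulAut.conj_apply, inv_inv]
  congr 1
  simp only [sq, mul_assoc, mul_inv_cancel_left]

namespace FDRep

variable {k G : Type*} [Field k] [Group G] [Fintype G]

noncomputable def sumSqHom (V : FDRep k G) : V ⟶ V :=
  ⟨FGModuleCat.ofHom (∑ x : G, V.ρ (x ^ 2)), fun g => by
    ext v; exact LinearMap.congr_fun (Representation.commute_sum_sq V.ρ g).eq v⟩

theorem exists_sum_rho_sq_eq_smul_id [IsAlgClosed k] (V : FDRep k G) [Simple V] :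
    ∃ c : k, ∑ x : G, V.ρ (x ^ 2) = c • LinearMap.id := by
  obtain ⟨c, hc⟩ := endomorphism_simple_eq_smul_id k V.sumSqHom
  exact ⟨c, LinearMap.ext fun v => (congrArg (fun f => f.hom.hom.hom v) hc).symm⟩

theorem exists_sum_character_sq_mul [IsAlgClosed k] (V : FDRep k G) [Simple V] :
    ∃ c : k, ∀ h : G, ∑ x : G, V.character (x ^ 2 * h) = c * V.character h := by
  obtain ⟨c, hc⟩ := V.exists_sum_rho_sq_eq_smul_id
  refine ⟨c, fun h => ?_⟩
  calc ∑ x : G, V.character (x ^ 2 * h)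
      = LinearMap.trace k V ((∑ x : G, V.ρ (x ^ 2)) * V.ρ h) := by
        simp only [FDRep.character, map_mul, Finset.sum_mul, map_sum]
    _ = c * V.character h := by
        rw [hc, smul_mul_assoc, map_smul, smul_eq_mul]
        rfl

end FDRep

theorem sum_ofFn_sq_prod_mul {G R : Type*} [Monoid G] [Fintype G] [CommSemiring R]
    (χ : G → R) (c : R) (hc : ∀ h : G, ∑ x : G, χ (x ^ 2 * h) = c * χ h) (n : ℕ) (h : G) :
    ∑ t : Fin n → G, χ ((List.ofFn fun i => t i ^ 2).prod * h) = c ^ n * χ h := by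
  induction n generalizing h with
  | zero => simp
  | succ n ih =>
    calc ∑ t : Fin (n + 1) → G, χ ((List.ofFn fun i => t i ^ 2).prod * h)
        = ∑ s : Fin n → G, ∑ x : G, χ (x ^ 2 * ((List.ofFn fun i => s i ^ 2).prod * h)) := by
          rw [Finset.sum_comm, ← Fintype.sum_prod_type']
          refine Fintype.sum_equiv (Fin.consEquiv fun _ => G).symm _ _ fun t => ?_
          simp [List.ofFn_succ, mul_assoc, Fin.tail]
      _ = c ^ (n + 1) * χ h := by
          rw [Finset.sum_congr rfl fun s _ => hc _, ← Finset.mul_sum, ih, pow_succ', mul_assoc]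

/-- Frobenius–Schur: if `ε` is the Frobenius–Schur indicator of the irreducible character
`ψ`, then the expected value of `ψ` under the measure induced by the word `x₁²⋯x_g²`
equals `ε^g / ψ(1)^{g-1}`. -/
theorem stmt4 (G : Type) [Group G] [Fintype G] (ψ : G → ℂ) (hψ : IsIrredChar G ψ)
    (ε : ℂ) (hε : ε = (1 / (Nat.card G : ℂ)) * ∑ x : G, ψ (x ^ 2))
    (g : ℕ) (hg : 1 ≤ g) :
    (1 / (Nat.card G : ℂ) ^ g) * ∑ t : Fin g → G,
        ψ ((List.ofFn fun i => (t i) ^ 2).prod) =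
      ε ^ g / (ψ 1) ^ (g - 1) := by
  obtain ⟨V, hV, hVψ⟩ := hψ
  obtain ⟨c, hc⟩ := V.exists_sum_character_sq_mul
  have hψc : ∀ h : G, ∑ x : G, ψ (x ^ 2 * h) = c * ψ h := by simpa only [hVψ] using hc
  have hε' : ε = 1 / (Nat.card G : ℂ) * (c * ψ 1) := by simpa [hε] using hψc 1
  have hsum : ∑ t : Fin g → G, ψ ((List.ofFn fun i => (t i) ^ 2).prod) = c ^ g * ψ 1 := by
    simpa only [mul_one] using sum_ofFn_sq_prod_mul ψ c hψc g 1
  obtain ⟨n, rfl⟩ := Nat.exists_eq_add_of_le' hg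
  rw [hsum, hε', Nat.add_sub_cancel, mul_pow, mul_pow, mul_div_assoc,
    mul_div_assoc, pow_succ_div_pow_self, one_div_pow]
end

section
/- An element w of a free group F is a product of squares (i.e., w = u₁²⋯u_g² for some g ≥ 0 and u_i ∈ F) if and only if w lies in K₂(F), the kernel of the map F → (Z/2Z)^{rank F} sending each free generator to a distinct standard generator. -/
/-!
The squares generate a normal subgroup `S ≤ K₂(F)`, and every element of it is a product of
squares because the inverse of a square is a square. In `F ⧸ S` every element squares to `1`,
so `F ⧸ S` is abelian and the classes of the free generators define a homomorphism
`ψ : (ℤ/2)^r → F ⧸ S`. Then `ψ ∘ φ` and the projection `F → F ⧸ S` agree on the generators,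
where `φ : F → (ℤ/2)^r` is the map defining `K₂(F)`, so `K₂(F) = ker φ ≤ S`.
-/

/-- `K₂(F_r)`: the kernel of the homomorphism `F_r → (ℤ/2ℤ)^r` sending each free
generator to a distinct standard generator. -/
def KmF (r m : ℕ) : Subgroup (FreeGroup (Fin r)) :=
  MonoidHom.ker
    (FreeGroup.lift fun i => fun j : Fin r =>
      Multiplicative.ofAdd (if i = j then (1 : ZMod m) else 0) :
      FreeGroup (Fin r) →* (Fin r → Multiplicative (ZMod m)))

open Subgroup

section PowClosure

variable {G : Type*} [Group G]

variable (G) in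
def powClosure (n : ℕ) : Subgroup G :=
  closure (Set.range fun u : G => u ^ n)

theorem pow_mem_powClosure (n : ℕ) (u : G) : u ^ n ∈ powClosure G n :=
  subset_closure ⟨u, rfl⟩

instance powClosure_normal (n : ℕ) : (powClosure G n).Normal where
  conj_mem w hw g := by
    have hconj := mem_map_of_mem (MulAut.conj g).toMonoidHom hw
    rw [powClosure, MonoidHom.map_closure, ← Set.range_comp] at hconj
    refine closure_mono ?_ hconj
    rintro _ ⟨u, rfl⟩
    exact ⟨g * u * g⁻¹, by simp [conj_pow]⟩

theorem mem_powClosure_iff_exists_list {n : ℕ} {w : G} :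
    w ∈ powClosure G n ↔ ∃ l : List G, w = (l.map (· ^ n)).prod := by
  constructor
  · intro hw
    induction hw using closure_induction with
    | mem _ hx =>
      obtain ⟨u, rfl⟩ := hx
      exact ⟨[u], by simp⟩
    | one => exact ⟨[], by simp⟩
    | mul _ _ _ _ hx hy =>
      obtain ⟨l₁, rfl⟩ := hx
      obtain ⟨l₂, rfl⟩ := hy
      exact ⟨l₁ ++ l₂, by simp⟩
    | inv _ _ hx =>
      obtain ⟨l, rfl⟩ := hx
      exact ⟨(l.map (·⁻¹)).reverse, by
        simp [List.prod_inv_reverse, List.map_reverse, Function.comp_def, inv_pow]⟩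
  · rintro ⟨l, rfl⟩
    refine Subgroup.list_prod_mem _ fun x hx => ?_
    obtain ⟨u, -, rfl⟩ := List.mem_map.mp hx
    exact pow_mem_powClosure n u

theorem mem_powClosure_iff {n : ℕ} {w : G} :
    w ∈ powClosure G n ↔ ∃ (g : ℕ) (u : Fin g → G), w = (List.ofFn fun i => u i ^ n).prod := by
  rw [mem_powClosure_iff_exists_list]
  constructor
  · rintro ⟨l, rfl⟩
    exact ⟨l.length, l.get, by nth_rw 1 [← List.ofFn_get l]; rw [List.map_ofFn]; rfl⟩
  · rintro ⟨g, u, rfl⟩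
    exact ⟨List.ofFn u, by rw [List.map_ofFn]; rfl⟩

theorem powClosure_le_ker {H : Type*} [Group H] {n : ℕ} (hH : ∀ h : H, h ^ n = 1) (f : G →* H) :
    powClosure G n ≤ f.ker :=
  closure_le _ |>.mpr <| by rintro _ ⟨u, rfl⟩; simp [hH]

theorem quotient_powClosure_pow_eq_one (n : ℕ) (q : G ⧸ powClosure G n) : q ^ n = 1 := by
  induction q using QuotientGroup.induction_on with
  | H u => rw [← QuotientGroup.mk_pow, QuotientGroup.eq_one_iff]; exact pow_mem_powClosure n u

end PowClosure

theorem Multiplicative.zmod_pow_eq_one (n : ℕ) (x : Multiplicative (ZMod n)) : x ^ n = 1 :=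
  ZModModule.char_nsmul_eq_zero n x.toAdd

theorem commute_of_forall_sq_eq_one {Q : Type*} [Group Q] (hQ : ∀ q : Q, q ^ 2 = 1) (a b : Q) :
    Commute a b := by
  have hinv (q : Q) : q⁻¹ = q := inv_eq_of_mul_eq_one_right (by rw [← sq, hQ])
  calc a * b = (a * b)⁻¹ := (hinv _).symm
    _ = b * a := by rw [mul_inv_rev, hinv, hinv]

def ZMod.liftOfPowEqOne {Q : Type*} [Group Q] {n : ℕ} (t : Q) (ht : t ^ n = 1) :
    Multiplicative (ZMod n) →* Q :=
  AddMonoidHom.toMultiplicativeLeft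
    (ZMod.lift n ⟨zmultiplesHom (Additive Q) (.ofMul t), by simpa using congrArg Additive.ofMul ht⟩)

theorem ZMod.liftOfPowEqOne_ofAdd_one {Q : Type*} [Group Q] {n : ℕ} (t : Q) (ht : t ^ n = 1) :
    ZMod.liftOfPowEqOne t ht (Multiplicative.ofAdd 1) = t := by
  simp only [ZMod.liftOfPowEqOne, AddMonoidHom.coe_toMultiplicativeLeft, Function.comp_apply,
    toAdd_ofAdd]
  rw [← Int.cast_one, ZMod.lift_coe]
  simp

theorem exists_monoidHom_pi_zmod_two {ι Q : Type*} [Fintype ι] [DecidableEq ι] [Group Q]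
    (hQ : ∀ q : Q, q ^ 2 = 1) (t : ι → Q) :
    ∃ ψ : (ι → Multiplicative (ZMod 2)) →* Q, ∀ i, ψ (Pi.mulSingle i (.ofAdd 1)) = t i := by
  let φ i := ZMod.liftOfPowEqOne (t i) (hQ _)
  have hcomm : Pairwise fun i j => ∀ x y, Commute (φ i x) (φ j y) :=
    fun _ _ _ _ _ => commute_of_forall_sq_eq_one hQ _ _
  exact ⟨MonoidHom.noncommPiCoprod φ hcomm, fun i => by simp [φ, ZMod.liftOfPowEqOne_ofAdd_one]⟩

def exponentSumModHom (r m : ℕ) : FreeGroup (Fin r) →* (Fin r → Multiplicative (ZMod m)) :=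
  FreeGroup.lift fun i j => Multiplicative.ofAdd (if i = j then (1 : ZMod m) else 0)

theorem KmF_eq_ker (r m : ℕ) : KmF r m = (exponentSumModHom r m).ker := rfl

theorem exponentSumModHom_of (r m : ℕ) (i : Fin r) :
    exponentSumModHom r m (FreeGroup.of i) = Pi.mulSingle i (.ofAdd 1) := by
  funext j
  simp [exponentSumModHom, Pi.mulSingle_apply, eq_comm, apply_ite Multiplicative.ofAdd]

theorem KmF_two_le_ker {r : ℕ} {Q : Type*} [Group Q] (hQ : ∀ q : Q, q ^ 2 = 1)
    (f : FreeGroup (Fin r) →* Q) : KmF r 2 ≤ f.ker := by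
  obtain ⟨ψ, hψ⟩ := exists_monoidHom_pi_zmod_two hQ fun i => f (FreeGroup.of i)
  have hf : ψ.comp (exponentSumModHom r 2) = f :=
    FreeGroup.ext_hom _ _ fun i => by simp [exponentSumModHom_of, hψ]
  intro w hw
  rw [KmF_eq_ker, MonoidHom.mem_ker] at hw
  rw [MonoidHom.mem_ker, ← hf, MonoidHom.comp_apply, hw, map_one]

theorem powClosure_le_KmF (r m : ℕ) : powClosure (FreeGroup (Fin r)) m ≤ KmF r m :=
  powClosure_le_ker (fun a => funext fun j => Multiplicative.zmod_pow_eq_one m (a j)) _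

theorem powClosure_two_eq_KmF (r : ℕ) : powClosure (FreeGroup (Fin r)) 2 = KmF r 2 :=
  le_antisymm (powClosure_le_KmF r 2)
    ((KmF_two_le_ker (quotient_powClosure_pow_eq_one 2) _).trans_eq
      (QuotientGroup.ker_mk' _))

/-- `w ∈ F_r` is a product of squares if and only if `w ∈ K₂(F_r)`. -/
theorem stmt7 (r : ℕ) (w : FreeGroup (Fin r)) :
    (∃ (g : ℕ) (u : Fin g → FreeGroup (Fin r)),
      w = (List.ofFn fun i => (u i) ^ 2).prod) ↔ w ∈ KmF r 2 := by
  rw [← powClosure_two_eq_KmF, mem_powClosure_iff]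
end

section
/- For the orientable surface word w = [x₁,y₁]⋯[x_g,y_g] ∈ F_{2g}, and every m ∈ Z_{≥2} ∪ {∞}, it holds that χ_m(w) = 1 - 2g, i.e., the minimal rank of a subgroup H ≤ F_{2g} with w ∈ K_m(H) is exactly 2g. -/
/-!
The upper bound is witnessed by `H = F_{2g}`, which has rank `2g` and contains `w` in its
commutator subgroup.

For the lower bound, suppose `w ∈ K_m(H)` with `H` generated by fewer than `2g` elements and pick a
prime `p ∣ m` (any prime if `m = ∞`). The image of `H` in `𝔽_p^{2g}` is a proper subspace, so some
functional `φ ≠ 0` vanishes on it. For any functional `c`, the group `𝔽_p^{2g} × 𝔽_p` with cocycle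
`φ(u) c(v)` has commutators `[(u,s),(v,t)] = (0, φ(u) c(v) - φ(v) c(u))`, and over `ker φ` it is
abelian of exponent `p`. Hence the homomorphism from `F_{2g}` sending the letters to the basis
vectors kills `K_m(H)`, while it sends `w` to the central element `∑ φ(xᵢ) c(yᵢ) - φ(yᵢ) c(xᵢ)`,
which is nonzero for a suitable coordinate functional `c`.
-/

/-- `K_m(H)` for a subgroup `H` of a (free) group `F`, viewed as a subgroup of `F`.
Here `m = 0` encodes `m = ∞`. It is the subgroup generated by all commutators of
elements of `H` together with all `m`-th powers of elements of `H`; for free `H` this is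
exactly the kernel of the map `H → (ℤ/mℤ)^{rank H}` sending a basis to the standard
generators (and `K_0(H) = [H,H]`). -/
def Kset {F : Type*} [Group F] (m : ℕ) (H : Subgroup F) : Subgroup F :=
  Subgroup.closure
    ({x | ∃ a ∈ H, ∃ b ∈ H, x = a * b * a⁻¹ * b⁻¹} ∪ {x | ∃ u ∈ H, x = u ^ m})

/-- The rank of a subgroup `H`: the minimal cardinality of a finite generating set
(`⊤` if `H` is not finitely generated). For subgroups of free groups this is the rank
of `H` as a free group. -/
noncomputable def grk {F : Type*} [Group F] (H : Subgroup F) : ℕ∞ :=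
  sInf ((fun S : Finset F => (S.card : ℕ∞)) '' {S | Subgroup.closure (S : Set F) = H})

/-- `minrk r m w = min { rank H : H ≤ F_r, w ∈ K_m(H) }` (`⊤` if no such `H` exists).
In the paper's notation, `χ_m(w) = 1 - minrk r m w`. Here `m = 0` encodes `m = ∞`. -/
noncomputable def minrk (r m : ℕ) (w : FreeGroup (Fin r)) : ℕ∞ :=
  sInf (grk '' {H : Subgroup (FreeGroup (Fin r)) | w ∈ Kset m H})

open scoped commutatorElement

def commutatorProd {G : Type*} [Group G] {g : ℕ} (a b : Fin g → G) : G :=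
  (List.ofFn fun i => ⁅a i, b i⁆).prod

lemma map_commutatorProd {G G' : Type*} [Group G] [Group G'] (f : G →* G') {g : ℕ}
    (a b : Fin g → G) : f (commutatorProd a b) = commutatorProd (f ∘ a) (f ∘ b) := by
  simp [commutatorProd, map_list_prod, List.map_ofFn, Function.comp_def, map_commutatorElement]

section Heisenberg

variable {R V : Type*} [CommRing R] [AddCommGroup V] [Module R V]

@[ext] structure Heis (φ c : V →ₗ[R] R) where
  v : V
  t : R

variable {φ c : V →ₗ[R] R}

instance : Mul (Heis φ c) := ⟨fun a b => ⟨a.v + b.v, a.t + b.t + φ a.v * c b.v⟩⟩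
instance : One (Heis φ c) := ⟨⟨0, 0⟩⟩
instance : Inv (Heis φ c) := ⟨fun a => ⟨-a.v, -a.t + φ a.v * c a.v⟩⟩

@[simp] lemma Heis.mul_v (a b : Heis φ c) : (a * b).v = a.v + b.v := rfl
@[simp] lemma Heis.mul_t (a b : Heis φ c) : (a * b).t = a.t + b.t + φ a.v * c b.v := rfl
@[simp] lemma Heis.one_v : (1 : Heis φ c).v = 0 := rfl
@[simp] lemma Heis.one_t : (1 : Heis φ c).t = 0 := rfl
@[simp] lemma Heis.inv_v (a : Heis φ c) : (a⁻¹).v = -a.v := rfl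
@[simp] lemma Heis.inv_t (a : Heis φ c) : (a⁻¹).t = -a.t + φ a.v * c a.v := rfl

instance : Group (Heis φ c) where
  mul_assoc a b d := by
    ext <;> simp only [Heis.mul_v, Heis.mul_t, map_add]
    case v => abel
    case t => ring
  one_mul a := by ext <;> simp
  mul_one a := by ext <;> simp
  inv_mul_cancel a := by
    ext <;> simp only [Heis.mul_v, Heis.mul_t, Heis.inv_v, Heis.inv_t, Heis.one_v, Heis.one_t,
      map_neg]
    case v => abel
    case t => ring

def Heis.vHom : Heis φ c →* Multiplicative V where
  toFun a := .ofAdd a.v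
  map_one' := rfl
  map_mul' _ _ := rfl

lemma Heis.commutatorElement_eq (a b : Heis φ c) :
    ⁅a, b⁆ = ⟨0, φ a.v * c b.v - φ b.v * c a.v⟩ := by
  rw [commutatorElement_def]
  ext <;> simp only [Heis.mul_v, Heis.mul_t, Heis.inv_v, Heis.inv_t, map_neg, map_add]
  case v => abel
  case t => ring

lemma Heis.pow_eq_of_apply_eq_zero (a : Heis φ c) (h : φ a.v = 0) (k : ℕ) :
    a ^ k = ⟨k • a.v, k • a.t⟩ := by
  induction k with
  | zero => ext <;> simp
  | succ n ih => ext <;> simp [pow_succ, ih, succ_nsmul, h]; ring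

lemma Heis.Kset_le_ker {G : Type*} [Group G] {m : ℕ} (hm : (m : R) = 0) {H : Subgroup G}
    (ψ : G →* Heis φ c) (hH : ∀ h ∈ H, φ (ψ h).v = 0) : Kset m H ≤ ψ.ker := by
  rw [Kset, Subgroup.closure_le]
  rintro _ (⟨a, ha, b, hb, rfl⟩ | ⟨u, hu, rfl⟩)
  · rw [SetLike.mem_coe, MonoidHom.mem_ker, ← commutatorElement_def, map_commutatorElement,
      Heis.commutatorElement_eq, hH a ha, hH b hb]
    ext <;> simp
  · rw [SetLike.mem_coe, MonoidHom.mem_ker, map_pow, Heis.pow_eq_of_apply_eq_zero _ (hH u hu)]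
    ext
    · simp [← Nat.cast_smul_eq_nsmul R, hm]
    · simp [hm]

lemma Heis.commutatorProd_eq {g : ℕ} (a b : Fin g → Heis φ c) :
    commutatorProd a b = ⟨0, ∑ i, (φ (a i).v * c (b i).v - φ (b i).v * c (a i).v)⟩ := by
  induction g with
  | zero => rfl
  | succ g ih =>
    rw [commutatorProd, List.ofFn_succ, List.prod_cons, ← commutatorProd, ih, Fin.sum_univ_succ,
      Heis.commutatorElement_eq]
    ext <;> simp

end Heisenberg

lemma commutatorProd_mem_Kset {F : Type*} [Group F] (m : ℕ) {H : Subgroup F} {g : ℕ}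
    {a b : Fin g → F} (ha : ∀ i, a i ∈ H) (hb : ∀ i, b i ∈ H) : commutatorProd a b ∈ Kset m H :=
  list_prod_mem <| by
    simp only [List.mem_ofFn, forall_exists_index, forall_apply_eq_imp_iff]
    exact fun i => Subgroup.subset_closure <| .inl ⟨a i, ha i, b i, hb i, commutatorElement_def _ _⟩

section SymplecticPairing

variable {K ι κ : Type*} [Field K] [DecidableEq ι] [Fintype κ]

def symplecticPairing (x y : κ → ι) (φ c : Module.Dual K (ι → K)) : K :=
  ∑ i, (φ (Pi.single (x i) 1) * c (Pi.single (y i) 1) -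
    φ (Pi.single (y i) 1) * c (Pi.single (x i) 1))

lemma symplecticPairing_swap (x y : κ → ι) (φ c : Module.Dual K (ι → K)) :
    symplecticPairing y x φ c = -symplecticPairing x y φ c := by
  simp [symplecticPairing]

lemma exists_symplecticPairing_ne_zero {x y : κ → ι} (hx : x.Injective) (hy : y.Injective)
    (hxy : ∀ i j, x i ≠ y j) {φ : Module.Dual K (ι → K)} {i₀ : κ}
    (hφ : φ (Pi.single (x i₀) 1) ≠ 0 ∨ φ (Pi.single (y i₀) 1) ≠ 0) :
    ∃ c, symplecticPairing x y φ c ≠ 0 := by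
  classical
  rcases hφ with hφ | hφ
  · refine ⟨LinearMap.proj (y i₀), ?_⟩
    simpa [symplecticPairing, Pi.single_apply, hy.eq_iff, hxy] using hφ
  · refine ⟨LinearMap.proj (x i₀), ?_⟩
    rw [← neg_ne_zero, ← symplecticPairing_swap]
    simpa [symplecticPairing, Pi.single_apply, hx.eq_iff, fun i j => (hxy j i).symm] using hφ

end SymplecticPairing

lemma Module.Dual.exists_apply_single_ne_zero {K ι : Type*} [Field K] [Finite ι] [DecidableEq ι]
    {φ : Module.Dual K (ι → K)} (hφ : φ ≠ 0) : ∃ j, φ (Pi.single j 1) ≠ 0 := by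
  contrapose! hφ
  exact (Pi.basisFun K ι).ext fun j => by simpa using hφ j

lemma exists_dual_ne_zero_forall_mem_closure {G K E : Type*} [Group G] [Field K] [AddCommGroup E]
    [Module K E] [FiniteDimensional K E] (α : G →* Multiplicative E) (S : Finset G)
    (hS : S.card < Module.finrank K E) :
    ∃ φ : Module.Dual K E, φ ≠ 0 ∧ ∀ h ∈ Subgroup.closure (S : Set G), φ (α h).toAdd = 0 := by
  classical
  set W := Submodule.span K (S.image fun s => (α s).toAdd : Set E)
  have hW : W < ⊤ := by
    refine lt_top_iff_ne_top.2 fun hW => hS.not_ge ?_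
    calc Module.finrank K E = Module.finrank K W := by rw [hW, finrank_top]
      _ ≤ (S.image fun s => (α s).toAdd).card := finrank_span_finset_le_card _
      _ ≤ S.card := Finset.card_image_le
  obtain ⟨φ, hφ, hφW⟩ := Submodule.exists_dual_map_eq_bot_of_lt_top hW inferInstance
  let ρ : G →* Multiplicative K := φ.toAddMonoidHom.toMultiplicative.comp α
  have hρ : Subgroup.closure (S : Set G) ≤ ρ.ker := (Subgroup.closure_le _).2 fun s hs => by
    have : (α s).toAdd ∈ W := Submodule.subset_span (Finset.mem_image_of_mem _ hs)
    simpa [ρ] using LinearMap.le_ker_iff_map.2 hφW this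
  exact ⟨φ, hφ, fun h hh => by simpa [ρ] using hρ hh⟩

section SurfaceWord

variable {g : ℕ}

def surfaceX (i : Fin g) : Fin (2 * g) := ⟨2 * i, by omega⟩

def surfaceY (i : Fin g) : Fin (2 * g) := ⟨2 * i + 1, by omega⟩

lemma surfaceX_injective : (surfaceX : Fin g → _).Injective :=
  fun i j h => Fin.ext (by simpa [surfaceX] using h)

lemma surfaceY_injective : (surfaceY : Fin g → _).Injective :=
  fun i j h => Fin.ext (by simpa [surfaceY] using h)

lemma surfaceX_ne_surfaceY (i j : Fin g) : surfaceX i ≠ surfaceY j :=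
  fun h => by simp [surfaceX, surfaceY, Fin.ext_iff] at h; omega

lemma exists_eq_surfaceX_or_eq_surfaceY (j : Fin (2 * g)) :
    ∃ i, j = surfaceX i ∨ j = surfaceY i :=
  ⟨⟨j / 2, by omega⟩, by simp only [surfaceX, surfaceY, Fin.ext_iff]; omega⟩

def surfaceWord (g : ℕ) : FreeGroup (Fin (2 * g)) :=
  commutatorProd (fun i => .of (surfaceX i)) (fun i => .of (surfaceY i))

theorem two_mul_le_card_of_surfaceWord_mem_Kset (K : Type*) [Field K] {m : ℕ} (hm : (m : K) = 0)
    (S : Finset (FreeGroup (Fin (2 * g))))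
    (hw : surfaceWord g ∈ Kset m (Subgroup.closure (S : Set (FreeGroup (Fin (2 * g)))))) :
    2 * g ≤ S.card := by
  by_contra! hS
  let α : FreeGroup (Fin (2 * g)) →* Multiplicative (Fin (2 * g) → K) :=
    FreeGroup.lift fun j => .ofAdd (Pi.single j 1)
  obtain ⟨φ, hφ, hφS⟩ := exists_dual_ne_zero_forall_mem_closure (K := K) α S (by simpa using hS)
  obtain ⟨j, hj⟩ := Module.Dual.exists_apply_single_ne_zero hφ
  obtain ⟨c, hc⟩ : ∃ c, symplecticPairing surfaceX surfaceY φ c ≠ 0 := by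
    obtain ⟨i, rfl | rfl⟩ := exists_eq_surfaceX_or_eq_surfaceY j
    exacts [exists_symplecticPairing_ne_zero surfaceX_injective surfaceY_injective
      surfaceX_ne_surfaceY (.inl hj), exists_symplecticPairing_ne_zero surfaceX_injective
      surfaceY_injective surfaceX_ne_surfaceY (.inr hj)]
  let ψ : FreeGroup (Fin (2 * g)) →* Heis φ c := FreeGroup.lift fun j => ⟨Pi.single j 1, 0⟩
  have hψα : Heis.vHom.comp ψ = α := FreeGroup.ext_hom _ _ fun _ => rfl
  have hψ_one : ψ (surfaceWord g) = 1 := by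
    refine Heis.Kset_le_ker hm ψ (fun h hh => ?_) hw
    simpa [← hψα, Heis.vHom] using hφS h hh
  have hψ_pairing : ψ (surfaceWord g) = ⟨0, symplecticPairing surfaceX surfaceY φ c⟩ := by
    rw [surfaceWord, map_commutatorProd, Heis.commutatorProd_eq]
    simp [ψ, symplecticPairing]
  exact hc (congrArg Heis.t (hψ_pairing.symm.trans hψ_one))

end SurfaceWord

lemma grk_closure_le {F : Type*} [Group F] (S : Finset F) :
    grk (Subgroup.closure (S : Set F)) ≤ S.card :=
  sInf_le ⟨S, rfl, rfl⟩

lemma le_grk {F : Type*} [Group F] {H : Subgroup F} {n : ℕ}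
    (h : ∀ S : Finset F, Subgroup.closure (S : Set F) = H → n ≤ S.card) : (n : ℕ∞) ≤ grk H :=
  le_sInf <| by
    rintro _ ⟨S, hS, rfl⟩
    exact Nat.cast_le.2 (h S hS)

lemma grk_top_le {ι : Type*} [Fintype ι] [DecidableEq ι] :
    grk (⊤ : Subgroup (FreeGroup ι)) ≤ Fintype.card ι := by
  have h := grk_closure_le (Finset.univ.image (FreeGroup.of : ι → FreeGroup ι))
  rw [Finset.coe_image, Finset.coe_univ, Set.image_univ, FreeGroup.closure_range_of] at h
  exact h.trans (by exact_mod_cast Finset.card_image_le)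

lemma minrk_le {r m : ℕ} {w : FreeGroup (Fin r)} {H : Subgroup (FreeGroup (Fin r))}
    (hw : w ∈ Kset m H) : minrk r m w ≤ grk H :=
  sInf_le ⟨H, hw, rfl⟩

lemma le_minrk {r m : ℕ} {w : FreeGroup (Fin r)} {n : ℕ∞}
    (h : ∀ H : Subgroup (FreeGroup (Fin r)), w ∈ Kset m H → n ≤ grk H) : n ≤ minrk r m w :=
  le_sInf <| by
    rintro _ ⟨H, hw, rfl⟩
    exact h H hw

/-- For the genus-`g` orientable surface word `w = [x₁,y₁]⋯[x_g,y_g] ∈ F_{2g}` and every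
`m ∈ ℤ_{≥2} ∪ {∞}` (`m = 0` encoding `∞`), the minimal rank of a subgroup `H ≤ F_{2g}`
with `w ∈ K_m(H)` is exactly `2g`, i.e. `χ_m(w) = 1 - 2g`. -/
theorem stmt13 (g m : ℕ) (hm : m = 0 ∨ 2 ≤ m) :
    minrk (2 * g) m
      ((List.ofFn fun i : Fin g =>
        ⁅FreeGroup.of (⟨2 * i.1, by have := i.isLt; omega⟩ : Fin (2 * g)),
          FreeGroup.of (⟨2 * i.1 + 1, by have := i.isLt; omega⟩ : Fin (2 * g))⁆).prod) =
      ((2 * g : ℕ) : ℕ∞) := by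
  change minrk (2 * g) m (surfaceWord g) = _
  have : Fact m.minFac.Prime := ⟨Nat.minFac_prime (by omega)⟩
  have hmp : (m : ZMod m.minFac) = 0 := (ZMod.natCast_eq_zero_iff _ _).2 m.minFac_dvd
  refine le_antisymm ?_ (le_minrk fun H hw => le_grk fun S hS => ?_)
  · calc minrk (2 * g) m (surfaceWord g) ≤ grk ⊤ :=
          minrk_le (commutatorProd_mem_Kset m (fun _ => trivial) fun _ => trivial)
      _ ≤ _ := by simpa using grk_top_le (ι := Fin (2 * g))
  · subst hS
    exact two_mul_le_card_of_surfaceWord_mem_Kset (ZMod m.minFac) hmp S hw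
end

section
/- Let A₁, A₂ be independent uniformly random elements of the signed symmetric group C₂ ≀ S_N (N×N matrices with one nonzero entry ±1 per row and column). Then E[tr(A₁²A₂²)] = 1/N for every N ≥ 1. -/
/-!
Summing over both factors turns the double sum into `tr(S²)` with `S = ∑_g g²`. Averaging over
the signs kills every entry of `(π, ε)²` off the fixed points of `π` (the sign characters are
orthogonal), so `S = 2ᴺ (N-1)! • 1`, and `tr(S²) / |G|² = N (2ᴺ (N-1)!)² / (2ᴺ N!)² = 1/N`.
-/

open Equiv Finset Matrix
open scoped Nat

lemma Matrix.sum_sum_trace_mul {ι κ n R : Type*} [Fintype n] [NonUnitalNonAssocSemiring R]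
    (s : Finset ι) (t : Finset κ) (A : ι → Matrix n n R) (B : κ → Matrix n n R) :
    ∑ i ∈ s, ∑ j ∈ t, trace (A i * B j) = trace ((∑ i ∈ s, A i) * ∑ j ∈ t, B j) := by
  simp_rw [sum_mul, mul_sum, trace_sum]

lemma Equiv.Perm.card_apply_eq_self {n : Type*} [Fintype n] [DecidableEq n] (j : n) :
    Fintype.card {π : Perm n // π j = j} = (Fintype.card n - 1)! := by
  have e : Perm {i // i ≠ j} ≃ {π : Perm n // π j = j} :=
    (Perm.subtypeEquivSubtypePerm _).trans <| subtypeEquivRight fun π =>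
      ⟨fun h => h j (not_not.2 rfl), fun h i hi => not_not.1 hi ▸ h⟩
  rw [← Fintype.card_congr e, Fintype.card_perm, Fintype.card_subtype_compl, Fintype.card_subtype_eq]

section SignedPermMatrix

variable {n R : Type*} [Fintype n] [DecidableEq n] [CommRing R]

def signedPermMatrix (π : Perm n) (ε : n → ℤˣ) : Matrix n n R :=
  of fun i j => if i = π j then ((ε j : ℤ) : R) else 0

lemma signedPermMatrix_sq_apply (π : Perm n) (ε : n → ℤˣ) (i j : n) :
    (signedPermMatrix π ε ^ 2 : Matrix n n R) i j =
      if i = π (π j) then ((ε (π j) : ℤ) : R) * ((ε j : ℤ) : R) else 0 := by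
  simp [sq, mul_apply, signedPermMatrix, ite_mul]

lemma sum_sign_mul_sign (a b : n) :
    ∑ ε : n → ℤˣ, ((ε a : ℤ) : R) * ((ε b : ℤ) : R) =
      if a = b then 2 ^ Fintype.card n else 0 := by
  split_ifs with hab
  · subst hab
    simp [← Int.cast_mul, ← Units.val_mul, Int.units_mul_self]
  · -- flipping the sign at `a` negates the summand
    refine sum_involution (fun ε _ => Function.update ε a (-ε a)) (fun ε _ => ?_)
      (fun ε _ _ => ?_) (by simp) (fun ε _ => ?_)
    · simp [Function.update_of_ne (Ne.symm hab)]
    · simp [Function.update_eq_self_iff]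
    · simp

lemma sum_signs_signedPermMatrix_sq (π : Perm n) :
    ∑ ε : n → ℤˣ, (signedPermMatrix π ε ^ 2 : Matrix n n R) =
      diagonal fun j => if π j = j then 2 ^ Fintype.card n else 0 := by
  ext i j
  simp only [Matrix.sum_apply, signedPermMatrix_sq_apply, diagonal_apply]
  by_cases h : i = π (π j)
  · subst h
    rw [Fintype.sum_congr _ _ fun ε => if_pos rfl, sum_sign_mul_sign]
    by_cases hj : π j = j <;> simp [hj]
  · have : ¬(i = j ∧ π i = i) := fun ⟨hij, hi⟩ => h (by rw [← hij, hi, hi])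
    simp only [h, if_false, sum_const_zero, ← ite_and, if_neg this]

lemma sum_signedPermMatrix_sq :
    ∑ p : Perm n × (n → ℤˣ), (signedPermMatrix p.1 p.2 ^ 2 : Matrix n n R) =
      (2 ^ Fintype.card n * (Fintype.card n - 1)! : R) • 1 := by
  rw [Fintype.sum_prod_type]
  simp_rw [sum_signs_signedPermMatrix_sq]
  ext i j
  simp only [Matrix.sum_apply, diagonal_apply, Matrix.smul_apply, one_apply]
  split_ifs with hij
  · rw [sum_ite, sum_const_zero, add_zero, sum_const, ← Fintype.card_subtype, hij,
      Perm.card_apply_eq_self, nsmul_eq_mul, smul_eq_mul, mul_one, mul_comm]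
  · simp

end SignedPermMatrix

/-- For independent uniformly random signed permutation matrices
`A₁, A₂ ∈ C₂ ≀ S_N` (one nonzero entry `±1` in each row and column),
`E[tr(A₁²A₂²)] = 1/N` for every `N ≥ 1`. An element is modelled by a pair
`(π, ε)` of a permutation and signs; the matrix `M π ε` has `(i,j)` entry `ε j`
if `i = π j` and `0` otherwise. -/
theorem stmt15 (N : ℕ) (hN : 1 ≤ N)
    (M : Equiv.Perm (Fin N) → (Fin N → ℤˣ) → Matrix (Fin N) (Fin N) ℂ)
    (hM : ∀ π ε i j, M π ε i j = if i = π j then ((ε j : ℤ) : ℂ) else 0) :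
    (1 / (Nat.card (Equiv.Perm (Fin N) × (Fin N → ℤˣ)) : ℂ) ^ 2) *
      ∑ p₁ : Equiv.Perm (Fin N) × (Fin N → ℤˣ),
        ∑ p₂ : Equiv.Perm (Fin N) × (Fin N → ℤˣ),
          Matrix.trace ((M p₁.1 p₁.2) ^ 2 * (M p₂.1 p₂.2) ^ 2) = 1 / (N : ℂ) := by
  obtain rfl : M = signedPermMatrix := funext₂ fun π ε => ext (hM π ε)
  have hcard : Nat.card (Perm (Fin N) × (Fin N → ℤˣ)) = N * ((N - 1)! * 2 ^ N) := by
    simp [Nat.card_eq_fintype_card, Fintype.card_perm,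
      ← Nat.mul_factorial_pred (n := N) (by omega), mul_assoc]
  rw [sum_sum_trace_mul, sum_signedPermMatrix_sq, hcard]
  have hN0 : (N : ℂ) ≠ 0 := Nat.cast_ne_zero.2 (by omega)
  have hfac : ((N - 1)! : ℂ) ≠ 0 := Nat.cast_ne_zero.2 (Nat.factorial_ne_zero _)
  simp only [smul_mul_smul, mul_one, trace_smul, trace_one, Fintype.card_fin, smul_eq_mul]
  push_cast
  field_simp
end

section
/- Let w ∈ F_r be a nontrivial word and m ∈ Z_{≥2}. If m > |w| (the word length of the reduced form of w), then for every subgroup H ≤ F_r: w ∈ K_m(H) if and only if w ∈ K_∞(H) = [H,H]. Consequently χ_m(w) = χ_∞(w) for all m > |w|. -/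
open Subgroup

section Kset

variable {G : Type*} [Group G]

theorem Kset_le (m : ℕ) (H : Subgroup G) : Kset m H ≤ H := by
  rw [Kset, closure_le]
  rintro x (⟨a, ha, b, hb, rfl⟩ | ⟨u, hu, rfl⟩)
  · exact H.mul_mem (H.mul_mem (H.mul_mem ha hb) (H.inv_mem ha)) (H.inv_mem hb)
  · exact H.pow_mem hu m

theorem commutator_le_Kset (m : ℕ) (H : Subgroup G) : ⁅H, H⁆ ≤ Kset m H := by
  rw [commutator_le]
  intro a ha b hb
  exact subset_closure (Or.inl ⟨a, ha, b, hb, commutatorElement_def a b⟩)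

theorem Kset_zero_le (m : ℕ) (H : Subgroup G) : Kset 0 H ≤ Kset m H := by
  rw [Kset, closure_le]
  rintro x (⟨a, ha, b, hb, rfl⟩ | ⟨u, -, rfl⟩)
  · exact subset_closure (Or.inl ⟨a, ha, b, hb, rfl⟩)
  · exact (pow_zero u).symm ▸ (Kset m H).one_mem

theorem dvd_of_mem_Kset {m : ℕ} {H : Subgroup G} (f : G → ℤ)
    (hf : ∀ u ∈ H, ∀ v ∈ H, f (u * v) = f u + f v) {x : G} (hx : x ∈ Kset m H) :
    (m : ℤ) ∣ f x := by
  have f_one : f 1 = 0 := by simpa using hf 1 H.one_mem 1 H.one_mem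
  have f_inv : ∀ u ∈ H, f u⁻¹ = -f u := fun u hu => by
    have := hf u hu u⁻¹ (H.inv_mem hu)
    rw [mul_inv_cancel, f_one] at this
    linarith
  have f_pow : ∀ u ∈ H, ∀ n : ℕ, f (u ^ n) = n * f u := fun u hu n => by
    induction n with
    | zero => simp [f_one]
    | succ n ih => rw [pow_succ, hf _ (H.pow_mem hu n) u hu, ih]; push_cast; ring
  induction hx using closure_induction with
  | mem y hy =>
    rcases hy with ⟨a, ha, b, hb, rfl⟩ | ⟨u, hu, rfl⟩
    · have hab := H.mul_mem ha hb
      rw [hf _ (H.mul_mem hab (H.inv_mem ha)) _ (H.inv_mem hb), hf _ hab _ (H.inv_mem ha),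
        hf a ha b hb, f_inv a ha, f_inv b hb]
      simp
    · exact ⟨f u, f_pow u hu m⟩
  | one => simp [f_one]
  | mul y z hy hz ihy ihz =>
    rw [hf y (Kset_le m H hy) z (Kset_le m H hz)]
    exact dvd_add ihy ihz
  | inv y hy ihy =>
    rw [f_inv y (Kset_le m H hy)]
    exact ihy.neg_right

end Kset

namespace Subgroup.IsComplement

variable {G : Type*} [Group G] {H : Subgroup G} {T : Set G} (hT : IsComplement (H : Set G) T)

theorem equiv_snd_mul_left_of_mem {h : G} (hh : h ∈ H) (g : G) :
    (hT.equiv (h * g)).2 = (hT.equiv g).2 := by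
  rw [hT.equiv_mul_left_of_mem hh]

theorem mul_inv_equiv_snd_mem (g : G) : g * ((hT.equiv g).2 : G)⁻¹ ∈ H :=
  hT.equiv_fst_eq_mul_inv g ▸ (hT.equiv g).1.2

theorem equiv_snd_equiv_snd_mul (g x : G) :
    (hT.equiv ((hT.equiv g).2 * x)).2 = (hT.equiv (g * x)).2 := by
  rw [show g * x = g * ((hT.equiv g).2 : G)⁻¹ * ((hT.equiv g).2 * x) by group,
    hT.equiv_snd_mul_left_of_mem (hT.mul_inv_equiv_snd_mem g)]

end Subgroup.IsComplement

namespace FreeGroup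

variable {α : Type*}

theorem mk_cons_true (a : α) (L : List (α × Bool)) : mk ((a, true) :: L) = of a * mk L :=
  (mul_mk (L₁ := [(a, true)])).symm

theorem mk_cons_false (a : α) (L : List (α × Bool)) : mk ((a, false) :: L) = (of a)⁻¹ * mk L := by
  rw [of, inv_mk, mul_mk]
  rfl

section Transversal

variable {H : Subgroup (FreeGroup α)} {T : Set (FreeGroup α)}
  (hT : IsComplement (H : Set (FreeGroup α)) T)

section PathProd

variable {M : Type*} [Group M]

/-- The product of the labels `f e` of the edges of the Schreier coset graph crossed by the path
that starts at `H g` and reads `L`, an edge crossed backwards contributing `(f e)⁻¹`. The edge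
leaving the coset with representative `t ∈ T` along the generator `a` is `(t, a)`. -/
noncomputable def pathProd (f : T × α → M) : FreeGroup α → List (α × Bool) → M
  | _, [] => 1
  | g, (a, true) :: L => f ((hT.equiv g).2, a) * pathProd f (g * of a) L
  | g, (a, false) :: L =>
      (f ((hT.equiv (g * (of a)⁻¹)).2, a))⁻¹ * pathProd f (g * (of a)⁻¹) L

variable (f : T × α → M)

theorem pathProd_append (g : FreeGroup α) (L₁ L₂ : List (α × Bool)) :
    pathProd hT f g (L₁ ++ L₂) = pathProd hT f g L₁ * pathProd hT f (g * mk L₁) L₂ := by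
  induction L₁ generalizing g with
  | nil => simp [pathProd, ← one_eq_mk]
  | cons p L ih =>
    obtain ⟨a, _ | _⟩ := p
    · simp [pathProd, ih, mk_cons_false, mul_assoc]
    · simp [pathProd, ih, mk_cons_true, mul_assoc]

theorem pathProd_cancel (g : FreeGroup α) (a : α) (b : Bool) (L : List (α × Bool)) :
    pathProd hT f g ((a, b) :: (a, !b) :: L) = pathProd hT f g L := by
  cases b <;> simp [pathProd]

theorem pathProd_eq_of_red {g : FreeGroup α} {L₁ L₂ : List (α × Bool)} (h : Red L₁ L₂) :
    pathProd hT f g L₁ = pathProd hT f g L₂ := by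
  induction h with
  | refl => rfl
  | tail _ step ih =>
    rw [ih]
    obtain @⟨L, L', a, b⟩ := step
    rw [pathProd_append, pathProd_append, pathProd_cancel]

theorem pathProd_eq_of_mk_eq {g : FreeGroup α} {L₁ L₂ : List (α × Bool)} (h : mk L₁ = mk L₂) :
    pathProd hT f g L₁ = pathProd hT f g L₂ := by
  obtain ⟨L, h₁, h₂⟩ := Red.exact.mp h
  rw [pathProd_eq_of_red hT f h₁, pathProd_eq_of_red hT f h₂]

theorem pathProd_mul_left_of_mem {h : FreeGroup α} (hh : h ∈ H) (g : FreeGroup α)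
    (L : List (α × Bool)) : pathProd hT f (h * g) L = pathProd hT f g L := by
  induction L generalizing g with
  | nil => rfl
  | cons p L ih =>
    obtain ⟨a, _ | _⟩ := p <;>
      simp only [pathProd, mul_assoc, hT.equiv_snd_mul_left_of_mem hh, ih]

theorem pathProd_toWord_mul [DecidableEq α] {u : FreeGroup α} (hu : u ∈ H) (v : FreeGroup α) :
    pathProd hT f 1 (toWord (u * v)) = pathProd hT f 1 (toWord u) * pathProd hT f 1 (toWord v) := by
  rw [pathProd_eq_of_mk_eq hT f (L₂ := toWord u ++ toWord v) (by rw [← mul_mk, mk_toWord,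
    mk_toWord, mk_toWord]), pathProd_append, mk_toWord, one_mul,
    ← mul_one u, pathProd_mul_left_of_mem hT f hu, mul_one]

theorem map_pathProd {N : Type*} [Group N] (φ : M →* N) (g : FreeGroup α) (L : List (α × Bool)) :
    φ (pathProd hT f g L) = pathProd hT (φ ∘ f) g L := by
  induction L generalizing g with
  | nil => exact φ.map_one
  | cons p L ih =>
    obtain ⟨a, _ | _⟩ := p <;> simp [pathProd, ih]

noncomputable def schreierGen (e : T × α) : H :=
  ⟨e.1 * of e.2 * ((hT.equiv (e.1 * of e.2)).2 : FreeGroup α)⁻¹,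
    hT.mul_inv_equiv_snd_mem _⟩

theorem pathProd_schreierGen (g : FreeGroup α) (L : List (α × Bool)) :
    ((pathProd hT (schreierGen hT) g L : H) : FreeGroup α) =
      (hT.equiv g).2 * mk L * ((hT.equiv (g * mk L)).2 : FreeGroup α)⁻¹ := by
  induction L generalizing g with
  | nil => simp [pathProd, ← one_eq_mk]
  | cons p L ih =>
    obtain ⟨a, _ | _⟩ := p
    · have hrep := hT.equiv_snd_equiv_snd_mul (g * (of a)⁻¹) (of a)
      rw [inv_mul_cancel_right] at hrep
      simp only [pathProd, schreierGen, Subgroup.coe_mul, Subgroup.coe_inv, ih, hrep, mk_cons_false,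
        mul_assoc]
      group
    · simp only [pathProd, schreierGen, Subgroup.coe_mul, ih, hT.equiv_snd_equiv_snd_mul,
        mk_cons_true, mul_assoc]
      group

end PathProd

/-- The signed number of times the path of `pathProd` crosses each edge. -/
noncomputable def crossings (g : FreeGroup α) (L : List (α × Bool)) : T × α →₀ ℤ :=
  Multiplicative.toAdd (pathProd hT (fun e => Multiplicative.ofAdd (Finsupp.single e 1)) g L)

theorem abs_crossings_apply_le (g : FreeGroup α) (L : List (α × Bool)) (e : T × α) :
    |crossings hT g L e| ≤ L.length := by
  classical
  have single_le : ∀ e', |Finsupp.single e' (1 : ℤ) e| ≤ 1 := fun e' => by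
    rw [Finsupp.single_apply]; split_ifs <;> simp
  induction L generalizing g with
  | nil => simp [crossings, pathProd]
  | cons p L ih =>
    obtain ⟨a, _ | _⟩ := p <;>
    · simp only [crossings, pathProd, toAdd_mul, toAdd_inv, toAdd_ofAdd, Finsupp.add_apply,
        Finsupp.neg_apply, List.length_cons, Nat.cast_succ] at ih ⊢
      rw [add_comm (L.length : ℤ)]
      exact (abs_add_le _ _).trans (add_le_add (by simpa using single_le _) (ih _))

theorem crossings_toWord_mul [DecidableEq α] {u : FreeGroup α} (hu : u ∈ H) (v : FreeGroup α) :
    crossings hT 1 (toWord (u * v)) = crossings hT 1 (toWord u) + crossings hT 1 (toWord v) := by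
  simp only [crossings, pathProd_toWord_mul hT _ hu, toAdd_mul]

theorem abelianization_of_pathProd_schreierGen (g : FreeGroup α) (L : List (α × Bool)) :
    Abelianization.of (pathProd hT (schreierGen hT) g L) =
      (crossings hT g L).prod fun e n => Abelianization.of (schreierGen hT e) ^ n := by
  let Φ : Multiplicative (T × α →₀ ℤ) →* Abelianization H :=
    AddMonoidHom.toMultiplicativeLeft <| Finsupp.liftAddHom fun e =>
      zmultiplesHom _ (Additive.ofMul (Abelianization.of (schreierGen hT e)))
  have hΦ : Abelianization.of ∘ schreierGen hT =
      Φ ∘ fun e => Multiplicative.ofAdd (Finsupp.single e 1) := by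
    funext e
    simp [Φ]
  rw [map_pathProd, hΦ, ← map_pathProd]
  simp [Φ, crossings, Finsupp.prod, Finsupp.sum]

end Transversal

theorem mem_Kset_zero_of_mem_Kset_of_length_lt [DecidableEq α] {H : Subgroup (FreeGroup α)}
    {m : ℕ} {w : FreeGroup α} (hw : w ∈ Kset m H) (hlen : (toWord w).length < m) :
    w ∈ Kset 0 H := by
  obtain ⟨T, hT, hT1⟩ := exists_isComplement_right H 1
  have hwH : w ∈ H := Kset_le m H hw
  have hc : crossings hT 1 (toWord w) = 0 := by
    ext e
    refine Int.eq_zero_of_abs_lt_dvd (m := m) ?_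
      ((abs_crossings_apply_le hT 1 _ e).trans_lt (by exact_mod_cast hlen))
    refine dvd_of_mem_Kset (fun u => crossings hT 1 (toWord u) e) (fun u hu v _ => ?_) hw
    simp only [crossings_toWord_mul hT hu, Finsupp.add_apply]
  have hw_eq : (⟨w, hwH⟩ : H) = pathProd hT (schreierGen hT) 1 (toWord w) := by
    ext
    rw [pathProd_schreierGen, mk_toWord, one_mul, hT.equiv_snd_eq_one_of_mem_of_one_mem hT1 hwH,
      hT.equiv_snd_eq_one_of_mem_of_one_mem hT1 H.one_mem]
    simp
  have hcomm : (⟨w, hwH⟩ : H) ∈ commutator H := by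
    rw [← Abelianization.ker_of, MonoidHom.mem_ker, hw_eq, abelianization_of_pathProd_schreierGen,
      hc, Finsupp.prod_zero_index]
  exact commutator_le_Kset 0 H (H.map_subtype_commutator ▸ mem_map_of_mem H.subtype hcomm)

end FreeGroup

theorem stmt17_general (r m : ℕ) (w : FreeGroup (Fin r))
    (hm : (FreeGroup.toWord w).length < m) :
    (∀ H : Subgroup (FreeGroup (Fin r)), w ∈ Kset m H ↔ w ∈ Kset 0 H) ∧
    minrk r m w = minrk r 0 w := by
  have hiff : ∀ H : Subgroup (FreeGroup (Fin r)), w ∈ Kset m H ↔ w ∈ Kset 0 H := fun H =>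
    ⟨fun h => FreeGroup.mem_Kset_zero_of_mem_Kset_of_length_lt h hm, fun h => Kset_zero_le m H h⟩
  exact ⟨hiff, by simp only [minrk, hiff]⟩

/-- If `w ≠ 1` and `m > |w|` (the reduced word length of `w`), then for every subgroup
`H ≤ F_r`, `w ∈ K_m(H)` iff `w ∈ K_∞(H) = [H,H]`; consequently `χ_m(w) = χ_∞(w)`
(equivalently `minrk r m w = minrk r 0 w`, with `m = 0` encoding `∞`). -/
theorem stmt17 (r m : ℕ) (w : FreeGroup (Fin r)) (hw : w ≠ 1)
    (hm : (FreeGroup.toWord w).length < m) :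
    (∀ H : Subgroup (FreeGroup (Fin r)), w ∈ Kset m H ↔ w ∈ Kset 0 H) ∧
    minrk r m w = minrk r 0 w :=
  stmt17_general r m w hm
end
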